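/- arXiv:1812.02109 — 2 statements merged into one kernel-verified Lean document; each statement's English description precedes it below -/
import Mathlib

section
/- Let T = V_K V_K^⊤ be a projection with V_K having orthonormal columns, C a row-selection matrix with sample set S, Ψ = (CV_K)^⊤ CV_K, P = C^⊤ C T, and β > 0. Then V_K (Ψ + β I_K)^{-1} (C V_K)^⊤ = T_{V,S} (T_S + β I_M)^{-1} C, i.e., the biased estimator x̂ = V_K (Ψ + βI)^{-1} (CV_K)^⊤ y_S equals T_{V,S} (T_S + βI)^{-1} y_S, where T_{V,S} denotes the columns of T indexed by S. -/
open Matrix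

lemma aux_posdef {m : ℕ} (A : Matrix (Fin m) (Fin m) ℝ) (hA : A.PosSemidef)
    (β : ℝ) (hβ : 0 < β) : (A + β • (1 : Matrix (Fin m) (Fin m) ℝ)).PosDef := by
  refine Matrix.PosDef.posSemidef_add hA ?_
  rw [← diagonal_one, ← diagonal_smul]
  exact posDef_diagonal_iff.mpr (fun i => by simpa using hβ)

/-- With `T = V Vᵀ`, sample set `S = range f`, `Ψ = (CV)ᵀCV` and `β > 0`,
`V (Ψ + βI)⁻¹ (CV)ᵀ = T_{V,S} (T_S + βI)⁻¹`, i.e. the biased estimator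
`x̂ = V (Ψ + βI)⁻¹ (CV)ᵀ y_S` equals `T_{V,S} (T_S + βI)⁻¹ y_S`, where `T_{V,S}` is
the `N × M` matrix of columns of `T` indexed by `S`. -/
theorem stmt12 (N M K : ℕ) (V : Matrix (Fin N) (Fin K) ℝ) (hV : Vᵀ * V = 1)
    (f : Fin M → Fin N) (hf : Function.Injective f)
    (C : Matrix (Fin M) (Fin N) ℝ)
    (hC : ∀ i j, C i j = if f i = j then 1 else 0)
    (β : ℝ) (hβ : 0 < β) :
    V * ((C * V)ᵀ * (C * V) + β • 1)⁻¹ * (C * V)ᵀ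
      = (V * Vᵀ).submatrix id f * ((V * Vᵀ).submatrix f f + β • 1)⁻¹ := by
  obtain ⟨A, hA⟩ : ∃ A, A = C * V := ⟨_, rfl⟩
  rw [← hA]
  have hA' : A = V.submatrix f id := by
    ext i k
    simp [hA, mul_apply, hC, submatrix_apply]
  have h1 : (V * Vᵀ).submatrix id f = V * Aᵀ := by
    ext i j
    simp [hA', mul_apply, submatrix_apply, transpose_apply]
  have h2 : (V * Vᵀ).submatrix f f = A * Aᵀ := by
    ext i j
    simp [hA', mul_apply, submatrix_apply, transpose_apply]
  rw [h1, h2]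
  have hP1 : (Aᵀ * A + β • (1 : Matrix (Fin K) (Fin K) ℝ)).PosDef := by
    refine aux_posdef _ ?_ β hβ
    simpa using posSemidef_conjTranspose_mul_self A
  have hP2 : (A * Aᵀ + β • (1 : Matrix (Fin M) (Fin M) ℝ)).PosDef := by
    refine aux_posdef _ ?_ β hβ
    simpa using posSemidef_self_mul_conjTranspose A
  have key : Aᵀ * (A * Aᵀ + β • 1) = (Aᵀ * A + β • 1) * Aᵀ := by
    simp only [Matrix.mul_add, Matrix.add_mul, Matrix.mul_smul, Matrix.smul_mul,
      Matrix.mul_one, Matrix.one_mul, Matrix.mul_assoc]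
  have hswap : (Aᵀ * A + β • 1)⁻¹ * Aᵀ = Aᵀ * (A * Aᵀ + β • 1)⁻¹ := by
    have e1 := hP1.isUnit
    have e2 := hP2.isUnit
    have h3 : (Aᵀ * A + β • 1)⁻¹ * (Aᵀ * (A * Aᵀ + β • 1)) * (A * Aᵀ + β • 1)⁻¹
        = (Aᵀ * A + β • 1)⁻¹ * ((Aᵀ * A + β • 1) * Aᵀ) * (A * Aᵀ + β • 1)⁻¹ := by rw [key]
    simp only [Matrix.mul_assoc] at h3
    rw [Matrix.mul_nonsing_inv _ (isUnit_iff_isUnit_det _ |>.mp e2), Matrix.mul_one,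
      ← Matrix.mul_assoc, ← Matrix.mul_assoc,
      Matrix.nonsing_inv_mul _ (isUnit_iff_isUnit_det _ |>.mp e1), Matrix.one_mul] at h3
    exact h3
  rw [Matrix.mul_assoc, Matrix.mul_assoc, hswap]
end

section
/- For the biased estimator x̂ = V_K (Ψ + βI)^{-1} (CV_K)^⊤ (Cx + n) of a K-bandlimited signal x = V_K x̃_K, with Ψ = U diag(σ_i) U^⊤ and noise n of mean zero and covariance ω² I, the mean squared error decomposes as E‖x̂ − x‖² = ∑_{i=1}^K (1 + σ_i/β)^{-2} (u_i^⊤ x̃_K)² + ω² ∑_{i=1}^K σ_i/(σ_i + β)², where u_i are the columns of U. -/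
open Matrix MeasureTheory

/-!
With `G = (Ψ + βI)⁻¹ (CV)ᵀ` the error is `x̂ - x = V ((G CV - I) x̃ + G n)`, and `V` is an
isometry. Since the noise is centred and white, the cross term vanishes in expectation and the
noise term contributes `ω² tr (G Gᵀ)`. Both `G CV - I` and `G Gᵀ` are functions of `Ψ`, hence
diagonalised by `U`, with eigenvalues `-β / (σᵢ + β)` and `σᵢ / (σᵢ + β)²`.
-/

section OrthogonalConj

variable {n : Type*} [Fintype n] [DecidableEq n] {R : Type*} [CommRing R] {U : Matrix n n R}

theorem conj_diagonal_mul_conj_diagonal (hU : Uᵀ * U = 1) (d e : n → R) :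
    U * diagonal d * Uᵀ * (U * diagonal e * Uᵀ) = U * diagonal (d * e) * Uᵀ := by
  simp only [Matrix.mul_assoc]
  rw [← Matrix.mul_assoc Uᵀ, hU, Matrix.one_mul, ← Matrix.mul_assoc (diagonal d),
    diagonal_mul_diagonal]
  rfl

theorem conj_diagonal_add (d e : n → R) :
    U * diagonal d * Uᵀ + U * diagonal e * Uᵀ = U * diagonal (d + e) * Uᵀ := by
  rw [← Matrix.add_mul, ← Matrix.mul_add, diagonal_add]; rfl

theorem conj_diagonal_sub (d e : n → R) :
    U * diagonal d * Uᵀ - U * diagonal e * Uᵀ = U * diagonal (d - e) * Uᵀ := by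
  rw [← Matrix.sub_mul, ← Matrix.mul_sub, diagonal_sub]; rfl

theorem conj_diagonal_const (hU : Uᵀ * U = 1) (c : R) :
    U * diagonal (fun _ => c) * Uᵀ = c • 1 := by
  rw [← smul_one_eq_diagonal, Matrix.mul_smul, Matrix.mul_one, Matrix.smul_mul,
    mul_eq_one_comm.mp hU]

theorem transpose_conj_diagonal (d : n → R) :
    (U * diagonal d * Uᵀ)ᵀ = U * diagonal d * Uᵀ := by
  simp only [transpose_mul, diagonal_transpose, transpose_transpose, Matrix.mul_assoc]

theorem trace_conj_diagonal (hU : Uᵀ * U = 1) (d : n → R) :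
    trace (U * diagonal d * Uᵀ) = ∑ i, d i := by
  rw [trace_mul_comm, ← Matrix.mul_assoc, hU, Matrix.one_mul, trace_diagonal]

theorem sum_sq_mulVec_of_transpose_mul_self {m : Type*} [Fintype m] (W : Matrix m n R)
    (hW : Wᵀ * W = 1) (z : n → R) : ∑ i, (W *ᵥ z) i ^ 2 = ∑ i, z i ^ 2 := by
  have : (W *ᵥ z) ⬝ᵥ (W *ᵥ z) = z ⬝ᵥ z := by
    rw [dotProduct_mulVec, ← mulVec_transpose, mulVec_mulVec, hW, one_mulVec]
  simpa only [dotProduct, sq] using this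

theorem sum_sq_conj_diagonal_mulVec (hU : Uᵀ * U = 1) (d z : n → R) :
    ∑ i, ((U * diagonal d * Uᵀ) *ᵥ z) i ^ 2 = ∑ i, d i ^ 2 * (Uᵀ *ᵥ z) i ^ 2 := by
  rw [← mulVec_mulVec, ← mulVec_mulVec, sum_sq_mulVec_of_transpose_mul_self U hU]
  simp only [mulVec_diagonal, mul_pow]

end OrthogonalConj

theorem inv_conj_diagonal {n K : Type*} [Fintype n] [DecidableEq n] [Field K]
    {U : Matrix n n K} (hU : Uᵀ * U = 1) {d : n → K} (hd : ∀ i, d i ≠ 0) :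
    (U * diagonal d * Uᵀ)⁻¹ = U * diagonal d⁻¹ * Uᵀ := by
  refine inv_eq_right_inv ?_
  have hdd : d * d⁻¹ = fun _ => 1 := funext fun i => mul_inv_cancel₀ (hd i)
  rw [conj_diagonal_mul_conj_diagonal hU, hdd, conj_diagonal_const hU, one_smul]

structure IsWhiteNoise {Ω k : Type*} [MeasurableSpace Ω] [DecidableEq k] (P : Measure Ω)
    (n : Ω → k → ℝ) (ω2 : ℝ) : Prop where
  integrable : ∀ i, Integrable (fun a => n a i) P
  integrable_mul : ∀ i j, Integrable (fun a => n a i * n a j) P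
  integral_eq_zero : ∀ i, ∫ a, n a i ∂P = 0
  integral_mul : ∀ i j, ∫ a, n a i * n a j ∂P = if i = j then ω2 else 0

theorem sq_dotProduct {k R : Type*} [Fintype k] [CommSemiring R] (u v : k → R) :
    (u ⬝ᵥ v) ^ 2 = ∑ j, ∑ l, u j * u l * (v j * v l) := by
  simp only [dotProduct, sq, Finset.sum_mul_sum]
  exact Finset.sum_congr rfl fun j _ => Finset.sum_congr rfl fun l _ => by ring

namespace IsWhiteNoise

variable {Ω k : Type*} [Fintype k] [DecidableEq k] [MeasurableSpace Ω] {P : Measure Ω}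
  {n : Ω → k → ℝ} {ω2 : ℝ}

theorem integrable_dotProduct (hn : IsWhiteNoise P n ω2) (u : k → ℝ) :
    Integrable (fun a => u ⬝ᵥ n a) P :=
  integrable_finsetSum _ fun j _ => (hn.integrable j).const_mul (u j)

theorem integral_dotProduct (hn : IsWhiteNoise P n ω2) (u : k → ℝ) :
    ∫ a, u ⬝ᵥ n a ∂P = 0 := by
  simp only [dotProduct]
  rw [integral_finsetSum _ fun j _ => (hn.integrable j).const_mul (u j)]
  simp [integral_const_mul, hn.integral_eq_zero]

theorem integrable_sq_dotProduct (hn : IsWhiteNoise P n ω2) (u : k → ℝ) :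
    Integrable (fun a => (u ⬝ᵥ n a) ^ 2) P := by
  simp only [sq_dotProduct]
  exact integrable_finsetSum _ fun j _ => integrable_finsetSum _ fun l _ =>
    (hn.integrable_mul j l).const_mul _

theorem integral_sq_dotProduct (hn : IsWhiteNoise P n ω2) (u : k → ℝ) :
    ∫ a, (u ⬝ᵥ n a) ^ 2 ∂P = ω2 * (u ⬝ᵥ u) := by
  simp only [sq_dotProduct]
  rw [integral_finsetSum _ fun j _ => integrable_finsetSum _ fun l _ =>
    (hn.integrable_mul j l).const_mul _]
  simp only [integral_finsetSum _ fun j _ => (hn.integrable_mul _ j).const_mul _,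
    integral_const_mul, hn.integral_mul, mul_ite, mul_zero, Finset.sum_ite_eq,
    Finset.mem_univ, if_true, dotProduct, Finset.mul_sum]
  exact Finset.sum_congr rfl fun j _ => by ring

variable [IsProbabilityMeasure P]

theorem integrable_sq_add_dotProduct (hn : IsWhiteNoise P n ω2) (b : ℝ) (u : k → ℝ) :
    Integrable (fun a => (b + u ⬝ᵥ n a) ^ 2) P :=
  ((integrable_const (b ^ 2)).add (((hn.integrable_dotProduct u).const_mul (2 * b)).add
    (hn.integrable_sq_dotProduct u))).congr
    (ae_of_all _ fun a => by simp only [Pi.add_apply]; ring)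

theorem integral_sq_add_dotProduct (hn : IsWhiteNoise P n ω2) (b : ℝ) (u : k → ℝ) :
    ∫ a, (b + u ⬝ᵥ n a) ^ 2 ∂P = b ^ 2 + ω2 * (u ⬝ᵥ u) := by
  have hexp : (fun a => (b + u ⬝ᵥ n a) ^ 2)
      = fun a => b ^ 2 + (2 * b * (u ⬝ᵥ n a) + (u ⬝ᵥ n a) ^ 2) := funext fun a => by ring
  have hlin := (hn.integrable_dotProduct u).const_mul (2 * b)
  have hsq := hn.integrable_sq_dotProduct u
  have hrest : Integrable (fun a => 2 * b * (u ⬝ᵥ n a) + (u ⬝ᵥ n a) ^ 2) P := hlin.add hsq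
  rw [hexp, integral_add (integrable_const _) hrest, integral_add hlin hsq,
    integral_const_mul, hn.integral_dotProduct, hn.integral_sq_dotProduct]
  simp

theorem integral_sum_sq_add_mulVec {m : Type*} [Fintype m] (hn : IsWhiteNoise P n ω2)
    (b : m → ℝ) (M : Matrix m k ℝ) :
    ∫ a, ∑ i, (b + M *ᵥ n a) i ^ 2 ∂P = ∑ i, b i ^ 2 + ω2 * trace (M * Mᵀ) := by
  change ∫ a, ∑ i, (b i + M i ⬝ᵥ n a) ^ 2 ∂P = _
  rw [integral_finsetSum _ fun i _ => hn.integrable_sq_add_dotProduct (b i) (M i)]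
  simp only [hn.integral_sq_add_dotProduct, Finset.sum_add_distrib, ← Finset.mul_sum]
  rfl

end IsWhiteNoise

section Ridge

variable {m n K : Type*} [Fintype m] [Fintype n] [DecidableEq n] [Field K]

noncomputable def ridgeGain (A : Matrix m n K) (β : K) : Matrix n m K :=
  (Aᵀ * A + β • 1)⁻¹ * Aᵀ

variable {A : Matrix m n K} {U : Matrix n n K} {σ : n → K} {β : K}

theorem inv_gram_add_smul_one (hU : Uᵀ * U = 1) (hΨ : Aᵀ * A = U * diagonal σ * Uᵀ)
    (hσβ : ∀ i, σ i + β ≠ 0) :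
    (Aᵀ * A + β • 1)⁻¹ = U * diagonal (fun i => (σ i + β)⁻¹) * Uᵀ := by
  rw [hΨ, ← conj_diagonal_const hU β, conj_diagonal_add,
    inv_conj_diagonal (d := σ + fun _ => β) hU hσβ]
  rfl

theorem ridgeGain_mul_sub_one (hU : Uᵀ * U = 1) (hΨ : Aᵀ * A = U * diagonal σ * Uᵀ)
    (hσβ : ∀ i, σ i + β ≠ 0) :
    ridgeGain A β * A - 1 = U * diagonal (fun i => -β / (σ i + β)) * Uᵀ := by
  have hdiag : (fun i => (σ i + β)⁻¹) * σ - (fun _ => 1) = fun i => -β / (σ i + β) :=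
    funext fun i => by simp only [Pi.mul_apply, Pi.sub_apply]; field_simp [hσβ i]; ring
  rw [ridgeGain, Matrix.mul_assoc, inv_gram_add_smul_one hU hΨ hσβ, hΨ,
    conj_diagonal_mul_conj_diagonal hU, ← one_smul K (1 : Matrix n n K),
    ← conj_diagonal_const hU, conj_diagonal_sub, hdiag]

theorem ridgeGain_mul_transpose (hU : Uᵀ * U = 1) (hΨ : Aᵀ * A = U * diagonal σ * Uᵀ)
    (hσβ : ∀ i, σ i + β ≠ 0) :
    ridgeGain A β * (ridgeGain A β)ᵀ
      = U * diagonal (fun i => σ i / (σ i + β) ^ 2) * Uᵀ := by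
  have hdiag : (fun i => (σ i + β)⁻¹) * (σ * fun i => (σ i + β)⁻¹)
      = fun i => σ i / (σ i + β) ^ 2 :=
    funext fun i => by simp only [Pi.mul_apply]; field_simp [hσβ i]
  rw [ridgeGain, transpose_mul, transpose_transpose, inv_gram_add_smul_one hU hΨ hσβ,
    transpose_conj_diagonal, Matrix.mul_assoc, ← Matrix.mul_assoc Aᵀ, hΨ,
    conj_diagonal_mul_conj_diagonal hU, conj_diagonal_mul_conj_diagonal hU, hdiag]

end Ridge

theorem stmt14_general (N M K : ℕ) (V : Matrix (Fin N) (Fin K) ℝ) (hV : Vᵀ * V = 1)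
    (C : Matrix (Fin M) (Fin N) ℝ)
    (U : Matrix (Fin K) (Fin K) ℝ) (σ : Fin K → ℝ) (hU : Uᵀ * U = 1)
    (hσ : ∀ i, 0 ≤ σ i)
    (hΨ : (C * V)ᵀ * (C * V) = U * Matrix.diagonal σ * Uᵀ)
    (β : ℝ) (hβ : 0 < β)
    (xt : Fin K → ℝ)
    (Ω : Type*) [MeasurableSpace Ω] (P : Measure Ω) [IsProbabilityMeasure P]
    (n : Ω → Fin M → ℝ) (ω2 : ℝ)
    (hmean : ∀ i, ∫ a, n a i ∂P = 0)
    (hcov : ∀ i j, ∫ a, n a i * n a j ∂P = if i = j then ω2 else 0)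
    (hint1 : ∀ i, Integrable (fun a => n a i) P)
    (hint2 : ∀ i j, Integrable (fun a => n a i * n a j) P) :
    ∫ a, (∑ i, ((V *ᵥ (((C * V)ᵀ * (C * V) + β • 1)⁻¹ *ᵥ
        ((C * V)ᵀ *ᵥ (C *ᵥ (V *ᵥ xt) + n a)))) i - (V *ᵥ xt) i) ^ 2) ∂P
      = (∑ i, ((1 + σ i / β) ^ 2)⁻¹ * ((Uᵀ *ᵥ xt) i) ^ 2)
        + ω2 * ∑ i, σ i / (σ i + β) ^ 2 := by
  set A := C * V
  set G := ridgeGain A β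
  have hσβ : ∀ i, σ i + β ≠ 0 := fun i => (add_pos_of_nonneg_of_pos (hσ i) hβ).ne'
  have hn : IsWhiteNoise P n ω2 := ⟨hint1, hint2, hmean, hcov⟩
  have herr : ∀ a,
      V *ᵥ ((Aᵀ * A + β • 1)⁻¹ *ᵥ (Aᵀ *ᵥ (C *ᵥ (V *ᵥ xt) + n a))) - V *ᵥ xt
        = V *ᵥ ((G * A - 1) *ᵥ xt + G *ᵥ n a) := fun a => by
    rw [mulVec_mulVec xt C V, ← mulVec_sub, mulVec_mulVec (_ + n a)]
    change V *ᵥ (G *ᵥ (A *ᵥ xt + n a) - xt) = _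
    rw [mulVec_add, sub_mulVec, one_mulVec, mulVec_mulVec]
    congr 1
    abel
  have hbias : ∀ i, (-β / (σ i + β)) ^ 2 = ((1 + σ i / β) ^ 2)⁻¹ := fun i => by
    rw [one_add_div hβ.ne', add_comm β, div_pow, div_pow, neg_sq, inv_div]
  calc _ = ∫ a, ∑ i, ((G * A - 1) *ᵥ xt + G *ᵥ n a : Fin K → ℝ) i ^ 2 ∂P := by
        refine integral_congr_ae (ae_of_all _ fun a => ?_)
        simp only [← Pi.sub_apply, herr, sum_sq_mulVec_of_transpose_mul_self V hV]
    _ = ∑ i, ((G * A - 1) *ᵥ xt) i ^ 2 + ω2 * trace (G * Gᵀ) :=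
        hn.integral_sum_sq_add_mulVec _ _
    _ = (∑ i, ((1 + σ i / β) ^ 2)⁻¹ * ((Uᵀ *ᵥ xt) i) ^ 2)
        + ω2 * ∑ i, σ i / (σ i + β) ^ 2 := by
        rw [ridgeGain_mul_sub_one hU hΨ hσβ, ridgeGain_mul_transpose hU hΨ hσβ,
          sum_sq_conj_diagonal_mulVec hU, trace_conj_diagonal hU]
        simp only [hbias]

/-- MSE of the biased (ridge) estimator `x̂ = V (Ψ + βI)⁻¹ (CV)ᵀ (Cx + n)` of the
`K`-bandlimited signal `x = V xt`, with `Ψ = (CV)ᵀCV = U diag(σ) Uᵀ` and noise `n` of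
zero mean and covariance `ω² I`:
`E‖x̂ - x‖² = ∑ᵢ (1 + σᵢ/β)⁻² (uᵢᵀ xt)² + ω² ∑ᵢ σᵢ/(σᵢ + β)²`. -/
theorem stmt14 (N M K : ℕ) (V : Matrix (Fin N) (Fin K) ℝ) (hV : Vᵀ * V = 1)
    (f : Fin M → Fin N) (hf : Function.Injective f)
    (C : Matrix (Fin M) (Fin N) ℝ)
    (hC : ∀ i j, C i j = if f i = j then 1 else 0)
    (U : Matrix (Fin K) (Fin K) ℝ) (σ : Fin K → ℝ) (hU : Uᵀ * U = 1)
    (hσ : ∀ i, 0 ≤ σ i)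
    (hΨ : (C * V)ᵀ * (C * V) = U * Matrix.diagonal σ * Uᵀ)
    (β : ℝ) (hβ : 0 < β)
    (xt : Fin K → ℝ)
    (Ω : Type*) [MeasurableSpace Ω] (P : Measure Ω) [IsProbabilityMeasure P]
    (n : Ω → Fin M → ℝ) (ω2 : ℝ)
    (hmean : ∀ i, ∫ a, n a i ∂P = 0)
    (hcov : ∀ i j, ∫ a, n a i * n a j ∂P = if i = j then ω2 else 0)
    (hint1 : ∀ i, Integrable (fun a => n a i) P)
    (hint2 : ∀ i j, Integrable (fun a => n a i * n a j) P) :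
    ∫ a, (∑ i, ((V *ᵥ (((C * V)ᵀ * (C * V) + β • 1)⁻¹ *ᵥ
        ((C * V)ᵀ *ᵥ (C *ᵥ (V *ᵥ xt) + n a)))) i - (V *ᵥ xt) i) ^ 2) ∂P
      = (∑ i, ((1 + σ i / β) ^ 2)⁻¹ * ((Uᵀ *ᵥ xt) i) ^ 2)
        + ω2 * ∑ i, σ i / (σ i + β) ^ 2 :=
  stmt14_general N M K V hV C U σ hU hσ hΨ β hβ xt Ω P n ω2 hmean hcov hint1 hint2
end
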